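/- arXiv:1404.7459 — 5 statements merged into one kernel-verified Lean document; each statement's English description precedes it below -/
import Mathlib

section
/- Let k be a field of characteristic p > 0, K* = k(x,y) the rational function field in two variables, u = x^p(1+y), v = y^p + x, and K = k(u,v) ⊆ K*. Then the finite field extension K ⊆ K* is separable. -/
open MvPolynomial IntermediateField

set_option maxHeartbeats 2000000
set_option synthInstance.maxHeartbeats 400000

/-- Let `k` be a field of characteristic `p > 0`,
`K* = k(x,y)` the rational function field in two variables, `u = x^p(1+y)`,
`v = y^p + x`, and `K = k(u,v) ⊆ K*`.  Then the finite field extension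
`K ⊆ K*` is separable. -/
theorem stmt5 (k : Type) [Field k] (p : ℕ) (hp : p.Prime) [CharP k p]
    (x y u v : FractionRing (MvPolynomial (Fin 2) k))
    (hx : x = algebraMap (MvPolynomial (Fin 2) k) _ (X 0))
    (hy : y = algebraMap (MvPolynomial (Fin 2) k) _ (X 1))
    (huv : u = x ^ p * (1 + y)) (hvv : v = y ^ p + x)
    (K : IntermediateField k (FractionRing (MvPolynomial (Fin 2) k)))
    (hK : K = IntermediateField.adjoin k {u, v}) :
    FiniteDimensional K (FractionRing (MvPolynomial (Fin 2) k)) ∧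
    Algebra.IsSeparable K (FractionRing (MvPolynomial (Fin 2) k)) := by
  have hxne : x ≠ 0 := by
    rw [hx]
    intro h
    exact MvPolynomial.X_ne_zero (R := k) 0
      ((IsFractionRing.injective (MvPolynomial (Fin 2) k) (FractionRing (MvPolynomial (Fin 2) k))) (by simpa using h))
  have hvK : v ∈ K := hK ▸ subset_adjoin k _ (by simp)
  have huK : u ∈ K := hK ▸ subset_adjoin k _ (by simp)
  haveI : CharP K p := charP_of_injective_algebraMap (algebraMap k K).injective p
  have hx' : x = v - y ^ p := by rw [hvv]; ring
  -- the polynomial over K killing y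
  set f : Polynomial K :=
    (Polynomial.C (⟨v, hvK⟩ : K) - Polynomial.X ^ p) ^ p * (1 + Polynomial.X)
      - Polynomial.C (⟨u, huK⟩ : K) with hf
  have hcv : algebraMap K (FractionRing (MvPolynomial (Fin 2) k)) ⟨v, hvK⟩ = v := rfl
  have hcu : algebraMap K (FractionRing (MvPolynomial (Fin 2) k)) ⟨u, huK⟩ = u := rfl
  have hfy : Polynomial.aeval y f = 0 := by
    simp only [hf, map_sub, map_mul, map_pow, map_add, map_one,
      Polynomial.aeval_X, Polynomial.aeval_C, hcv, hcu]
    rw [← hx', huv]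
    ring
  have hder : Polynomial.derivative f =
      (Polynomial.C (⟨v, hvK⟩ : K) - Polynomial.X ^ p) ^ p := by
    have hp0 : ((p : K)) = 0 := CharP.cast_eq_zero K p
    have h1 : Polynomial.derivative
        ((Polynomial.C (⟨v, hvK⟩ : K) - Polynomial.X ^ p)) = 0 := by
      simp [Polynomial.derivative_X_pow, hp0]
    rw [hf]
    rw [Polynomial.derivative_sub, Polynomial.derivative_mul,
      Polynomial.derivative_pow, h1, Polynomial.derivative_C]
    simp
  have hdy : Polynomial.aeval y (Polynomial.derivative f) = x ^ p := by
    rw [hder]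
    simp only [map_sub, map_pow, Polynomial.aeval_X, Polynomial.aeval_C, hcv]
    rw [← hx']
  have hdyne : Polynomial.aeval y (Polynomial.derivative f) ≠ 0 := by
    rw [hdy]; exact pow_ne_zero _ hxne
  have hfne : f ≠ 0 := by
    intro h
    rw [h] at hdyne
    simp at hdyne
  have hint : IsIntegral K y := (IsAlgebraic.isIntegral ⟨f, hfne, hfy⟩)
  -- y is separable over K
  have hsep : IsSeparable K y := by
    obtain ⟨h, hfh⟩ := minpoly.dvd K y hfy
    have hirr := minpoly.irreducible hint
    have hgder : Polynomial.derivative (minpoly (↥K) y) ≠ 0 := by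
      intro hd0
      apply hdyne
      rw [hfh, Polynomial.derivative_mul, hd0, map_add, map_mul, map_mul]
      rw [minpoly.aeval]
      simp
    exact (Polynomial.separable_iff_derivative_ne_zero hirr).2 hgder
  haveI hsepadj : Algebra.IsSeparable K K⟮y⟯ :=
    (IntermediateField.isSeparable_adjoin_simple_iff_isSeparable K (FractionRing (MvPolynomial (Fin 2) k))).2 hsep
  haveI hfd : FiniteDimensional K K⟮y⟯ := adjoin.finiteDimensional hint
  -- K⟮y⟯ = ⊤
  have hyT : y ∈ K⟮y⟯ := mem_adjoin_simple_self K y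
  have hvT : v ∈ K⟮y⟯ := K⟮y⟯.algebraMap_mem ⟨v, hvK⟩
  have hxT : x ∈ K⟮y⟯ := by
    rw [hx']
    exact sub_mem hvT (pow_mem hyT p)
  have hpoly : ∀ q : MvPolynomial (Fin 2) k,
      algebraMap (MvPolynomial (Fin 2) k) (FractionRing (MvPolynomial (Fin 2) k)) q ∈ K⟮y⟯ := by
    intro q
    induction q using MvPolynomial.induction_on with
    | C a =>
        have : algebraMap (MvPolynomial (Fin 2) k) (FractionRing (MvPolynomial (Fin 2) k)) (MvPolynomial.C a)
            = algebraMap k (FractionRing (MvPolynomial (Fin 2) k)) a := by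
          rw [IsScalarTower.algebraMap_apply k (MvPolynomial (Fin 2) k)
            (FractionRing (MvPolynomial (Fin 2) k)), MvPolynomial.algebraMap_eq]
        rw [this]
        have haK : algebraMap k (FractionRing (MvPolynomial (Fin 2) k)) a ∈ K := K.algebraMap_mem a
        exact K⟮y⟯.algebraMap_mem ⟨_, haK⟩
    | add q r hq hr => rw [map_add]; exact add_mem hq hr
    | mul_X q i hq =>
        rw [map_mul]
        refine mul_mem hq ?_
        fin_cases i
        · exact hx ▸ hxT
        · exact hy ▸ hyT
  have hTop : K⟮y⟯ = ⊤ := by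
    rw [eq_top_iff]
    intro z _
    obtain ⟨a, b, -, rfl⟩ := IsFractionRing.div_surjective (A := MvPolynomial (Fin 2) k) z
    exact div_mem (hpoly a) (hpoly b)
  let e : K⟮y⟯ ≃ₐ[K] (FractionRing (MvPolynomial (Fin 2) k)) :=
    (IntermediateField.equivOfEq hTop).trans IntermediateField.topEquiv
  exact ⟨e.toLinearEquiv.finiteDimensional, AlgEquiv.Algebra.isSeparable e⟩
end

section
/- Let k be a field of characteristic p > 0 and suppose u, v ∈ k⟦x,y⟧ satisfy u = x^p(c₀ + f₀ y + x Λ₀) and v = τ₀(y) y^p + e₀ x + x Ω₀ with c₀, f₀, e₀ ∈ k nonzero, τ₀(y) ∈ k⟦y⟧ a unit power series, Λ₀, Ω₀ ∈ k⟦x,y⟧ and Ω₀ with zero constant term. For each integer i with 0 ≤ i < p, let σ_i : k⟦x,y⟧ → k⟦X,Y⟧ be the unique continuous k-algebra homomorphism with σ_i(x) = X·Y^i and σ_i(y) = Y. Then in k⟦X,Y⟧, σ_i(u) does not divide σ_i(v) and σ_i(v) does not divide σ_i(u). (In particular the ideal generated by σ_i(u) and σ_i(v) in k⟦X,Y⟧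 is not principal.) -/
/-!
After substitution, `σ u = (X Y^i)^p ε` and `σ v = τ Y^p + X Y^i η` with `ε, τ, η` units, and
`X`, `Y` are non-associate primes of `k⟦X,Y⟧`. A generator `w` of `(σ u, σ v)` divides `σ u`
and is prime to `X` (because `X ∤ σ v`), so `w ~ Y^c`; as `Y^(i+1) ∤ σ v`, `c ≤ i`. But then
both `σ u` and `σ v` lie in `Y^c (X, Y)`, so `Y^c ∈ Y^c (X, Y)` and `1 ∈ (X, Y)`, absurd.
Either divisibility would make the ideal principal.
-/

open MvPowerSeries

noncomputable def psMaxIdeal (k : Type) [Field k] : Ideal (MvPowerSeries (Fin 2) k) :=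
  RingHom.ker (MvPowerSeries.constantCoeff (σ := Fin 2) (R := k))

/-- Continuity for the maximal-adic topologies is the last clause; such a continuous
`k`-algebra homomorphism is unique when `a` and `b` have zero constant term. -/
def IsSubstitutionHom (k : Type) [Field k]
    (σ : MvPowerSeries (Fin 2) k →+* MvPowerSeries (Fin 2) k)
    (a b : MvPowerSeries (Fin 2) k) : Prop :=
  (∀ c : k, σ (MvPowerSeries.C (σ := Fin 2) (R := k) c) = MvPowerSeries.C (σ := Fin 2) (R := k) c) ∧
  σ (MvPowerSeries.X 0) = a ∧ σ (MvPowerSeries.X 1) = b ∧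
  ∀ n : ℕ, ∃ m : ℕ, ∀ F ∈ (psMaxIdeal k) ^ m, σ F ∈ (psMaxIdeal k) ^ n

def IsSubstitutionHom₁ (k : Type) [Field k]
    (ε : PowerSeries k →+* MvPowerSeries (Fin 2) k)
    (w : MvPowerSeries (Fin 2) k) : Prop :=
  (∀ c : k, ε (PowerSeries.C (R := k) c) = MvPowerSeries.C (σ := Fin 2) (R := k) c) ∧
  ε PowerSeries.X = w ∧
  ∀ n : ℕ, ∃ m : ℕ,
    ∀ F ∈ (RingHom.ker (PowerSeries.constantCoeff (R := k))) ^ m, ε F ∈ (psMaxIdeal k) ^ n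

instance MvPowerSeries.instIsDomain {σ R : Type*} [CommRing R] [IsDomain R] :
    IsDomain (MvPowerSeries σ R) :=
  NoZeroDivisors.to_isDomain _

theorem MvPowerSeries.X_prime {σ R : Type*} [CommRing R] [IsDomain R] (s : σ) :
    Prime (X s : MvPowerSeries σ R) := by
  classical
  let e := (renameEquiv R (Equiv.optionSubtypeNe s).symm).trans
    (optionEquivLeft {t // t ≠ s} R)
  have he : e (X s) = PowerSeries.X := by
    simp [e, renameEquiv]
  rw [← MulEquiv.prime_iff e, he]
  exact PowerSeries.X_prime

theorem MvPowerSeries.X_not_dvd_X {σ R : Type*} [CommSemiring R] [Nontrivial R] {s t : σ}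
    (hst : s ≠ t) : ¬ (X s : MvPowerSeries σ R) ∣ X t := by
  classical
  rw [X_dvd_iff]
  push Not
  exact ⟨Finsupp.single t 1, by simp [hst], by simp [coeff_X]⟩

section Domain

variable {R : Type*} [CommRing R] [IsDomain R] {x y : R}

theorem Prime.exists_associated_pow_of_dvd_pow_mul_pow (hx : Prime x) (hy : Prime y) {w : R}
    {m n : ℕ} (hwx : ¬ x ∣ w) (hw : w ∣ x ^ m * y ^ n) : ∃ c ≤ n, Associated w (y ^ c) := by
  obtain ⟨t, ht⟩ := hw
  obtain ⟨t', rfl⟩ : x ^ m ∣ t := hx.pow_dvd_of_dvd_mul_left m hwx ⟨y ^ n, ht.symm⟩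
  have hwy : w ∣ y ^ n :=
    ⟨t', mul_left_cancel₀ (pow_ne_zero m hx.ne_zero) (by rw [ht]; ring)⟩
  exact (dvd_prime_pow hy n).mp hwy

theorem not_isPrincipal_span_pow_mul_unit_pair (hx : Prime x) (hy : Prime y) (hxy : ¬ x ∣ y)
    (hyx : ¬ y ∣ x) (hspan : Ideal.span {x, y} ≠ ⊤) {ε τ η : R} (hε : IsUnit ε)
    (hτ : IsUnit τ) (hη : IsUnit η) {i p : ℕ} (hip : i < p) :
    ¬ (Ideal.span {(x * y ^ i) ^ p * ε, τ * y ^ p + x * y ^ i * η}).IsPrincipal := by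
  set a := (x * y ^ i) ^ p * ε
  set b := τ * y ^ p + x * y ^ i * η
  have hxb : ¬ x ∣ b := fun h ↦ by
    have : x ∣ τ * y ^ p := (dvd_add_left (dvd_mul_of_dvd_left (dvd_mul_right x _) η)).mp h
    exact hxy (hx.dvd_of_dvd_pow (hτ.dvd_mul_left.mp this))
  have hyb : ¬ y ^ (i + 1) ∣ b := fun h ↦ by
    have hyp : y ^ (i + 1) ∣ τ * y ^ p := dvd_mul_of_dvd_right (pow_dvd_pow y hip) τ
    obtain ⟨z, hz⟩ := (dvd_add_right hyp).mp h
    have : y ∣ x * η :=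
      ⟨z, mul_left_cancel₀ (pow_ne_zero i hy.ne_zero) (by linear_combination hz)⟩
    exact hyx (hη.dvd_mul_right.mp this)
  rintro ⟨w, hw⟩
  have hw' : Ideal.span {a, b} = Ideal.span {w} := hw
  have hwa : w ∣ a := Ideal.mem_span_singleton.mp (hw' ▸ Ideal.subset_span (by simp))
  have hwb : w ∣ b := Ideal.mem_span_singleton.mp (hw' ▸ Ideal.subset_span (by simp))
  obtain ⟨c, -, hwc⟩ := hx.exists_associated_pow_of_dvd_pow_mul_pow hy (m := p) (n := i * p)
    (fun h ↦ hxb (h.trans hwb)) (by rw [pow_mul, ← mul_pow]; exact hε.dvd_mul_right.mp hwa)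
  have hci : c ≤ i := by
    by_contra! h
    exact hyb ((pow_dvd_pow y h).trans (hwc.symm.dvd.trans hwb))
  obtain ⟨α, β, hαβ⟩ : ∃ α β, α * a + β * b = y ^ c := by
    rw [← Ideal.mem_span_pair, hw', Ideal.span_singleton_eq_span_singleton.mpr hwc]
    exact Ideal.mem_span_singleton_self _
  obtain ⟨j, rfl⟩ := Nat.exists_eq_add_of_le hci
  obtain ⟨q, rfl⟩ := Nat.exists_eq_add_of_lt hip
  refine hspan (Ideal.eq_top_of_isUnit_mem _ (Ideal.mem_span_pair.mpr
    ⟨α * (x * y ^ (c + j)) ^ (c + j + q) * y ^ j * ε + β * y ^ j * η, β * τ * y ^ (j + q),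
      ?_⟩) isUnit_one)
  -- `a, b ∈ y ^ c • (x, y)`, so cancelling `y ^ c` in `α a + β b = y ^ c` puts `1` in `(x, y)`
  refine mul_left_cancel₀ (pow_ne_zero c hy.ne_zero) ?_
  linear_combination hαβ

end Domain

theorem stmt6_general (k : Type) [Field k] (p : ℕ)
    (u v Λ Ω T : MvPowerSeries (Fin 2) k) (c₀ f₀ e₀ : k)
    (hc : c₀ ≠ 0) (he : e₀ ≠ 0)
    (hTu : MvPowerSeries.constantCoeff (σ := Fin 2) (R := k) T ≠ 0)
    (hΩ : MvPowerSeries.constantCoeff (σ := Fin 2) (R := k) Ω = 0)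
    -- `u = x^p (c₀ + f₀ y + x Λ₀)`:
    (hu : u = (MvPowerSeries.X 0) ^ p *
      (MvPowerSeries.C (σ := Fin 2) (R := k) c₀ + MvPowerSeries.C (σ := Fin 2) (R := k) f₀ * MvPowerSeries.X 1
        + MvPowerSeries.X 0 * Λ))
    -- `v = τ₀(y) y^p + e₀ x + x Ω₀`:
    (hv : v = T * (MvPowerSeries.X 1) ^ p
      + MvPowerSeries.C (σ := Fin 2) (R := k) e₀ * MvPowerSeries.X 0 + MvPowerSeries.X 0 * Ω)
    (i : ℕ) (hip : i < p)
    (σ : MvPowerSeries (Fin 2) k →+* MvPowerSeries (Fin 2) k)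
    (hσ : IsSubstitutionHom k σ (MvPowerSeries.X 0 * MvPowerSeries.X 1 ^ i)
      (MvPowerSeries.X 1)) :
    ¬ (σ u ∣ σ v) ∧ ¬ (σ v ∣ σ u) ∧
    ¬ (Ideal.span {σ u, σ v} : Ideal (MvPowerSeries (Fin 2) k)).IsPrincipal := by
  obtain ⟨-, hX₀, hX₁, -⟩ := hσ
  have hunit {F : MvPowerSeries (Fin 2) k} (hF : constantCoeff F ≠ 0) : IsUnit (σ F) :=
    (isUnit_iff_constantCoeff.mpr hF.isUnit).map σ
  have hσu : σ u = (X 0 * X 1 ^ i) ^ p * σ (C c₀ + C f₀ * X 1 + X 0 * Λ) := by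
    rw [hu, map_mul, map_pow, hX₀]
  have hσv : σ v = σ T * X 1 ^ p + X 0 * X 1 ^ i * σ (C e₀ + Ω) := by
    rw [hv]
    simp only [map_add, map_mul, map_pow, hX₀, hX₁]
    ring
  have hspan : Ideal.span {X 0, X 1} ≠ (⊤ : Ideal (MvPowerSeries (Fin 2) k)) :=
    ne_top_of_le_ne_top (RingHom.ker_ne_top constantCoeff)
      (Ideal.span_le.mpr (by simp [Set.insert_subset_iff]))
  have hε : IsUnit (σ (C c₀ + C f₀ * X 1 + X 0 * Λ)) := hunit (by simpa using hc)
  have hη : IsUnit (σ (C e₀ + Ω)) := hunit (by simpa [hΩ] using he)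
  have hprincipal := not_isPrincipal_span_pow_mul_unit_pair (X_prime (R := k) 0) (X_prime 1)
    (X_not_dvd_X zero_ne_one) (X_not_dvd_X one_ne_zero) hspan hε (hunit hTu) hη hip
  rw [hσu, hσv]
  exact ⟨fun h ↦ hprincipal ⟨⟨_, Ideal.span_pair_eq_span_left_iff_dvd.mpr h⟩⟩,
    fun h ↦ hprincipal ⟨⟨_, Ideal.span_pair_eq_span_right_iff_dvd.mpr h⟩⟩, hprincipal⟩

/-- With `u = x^p(c₀ + f₀ y + x Λ₀)` and
`v = τ₀(y) y^p + e₀ x + x Ω₀` as in the hypotheses, for `0 ≤ i < p` and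
`σᵢ : k⟦x,y⟧ → k⟦X,Y⟧` the substitution `x ↦ X Y^i`, `y ↦ Y`, neither of
`σᵢ(u)`, `σᵢ(v)` divides the other in `k⟦X,Y⟧`; in particular the ideal
they generate is not principal. -/
theorem stmt6 (k : Type) [Field k] (p : ℕ) (hp : p.Prime) [CharP k p]
    (u v Λ Ω T : MvPowerSeries (Fin 2) k) (c₀ f₀ e₀ : k)
    (hc : c₀ ≠ 0) (hf : f₀ ≠ 0) (he : e₀ ≠ 0)
    -- `T` is a unit power series in `y` alone (`τ₀(y)`):
    (hTy : ∀ d : Fin 2 →₀ ℕ, d 0 ≠ 0 → MvPowerSeries.coeff (R := k) d T = 0)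
    (hTu : MvPowerSeries.constantCoeff (σ := Fin 2) (R := k) T ≠ 0)
    (hΩ : MvPowerSeries.constantCoeff (σ := Fin 2) (R := k) Ω = 0)
    -- `u = x^p (c₀ + f₀ y + x Λ₀)`:
    (hu : u = (MvPowerSeries.X 0) ^ p *
      (MvPowerSeries.C (σ := Fin 2) (R := k) c₀ + MvPowerSeries.C (σ := Fin 2) (R := k) f₀ * MvPowerSeries.X 1
        + MvPowerSeries.X 0 * Λ))
    -- `v = τ₀(y) y^p + e₀ x + x Ω₀`:
    (hv : v = T * (MvPowerSeries.X 1) ^ p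
      + MvPowerSeries.C (σ := Fin 2) (R := k) e₀ * MvPowerSeries.X 0 + MvPowerSeries.X 0 * Ω)
    (i : ℕ) (hip : i < p)
    (σ : MvPowerSeries (Fin 2) k →+* MvPowerSeries (Fin 2) k)
    (hσ : IsSubstitutionHom k σ (MvPowerSeries.X 0 * MvPowerSeries.X 1 ^ i)
      (MvPowerSeries.X 1)) :
    ¬ (σ u ∣ σ v) ∧ ¬ (σ v ∣ σ u) ∧
    ¬ (Ideal.span {σ u, σ v} : Ideal (MvPowerSeries (Fin 2) k)).IsPrincipal :=
  stmt6_general k p u v Λ Ω T c₀ f₀ e₀ hc he hTu hΩ hu hv i hip σ hσ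
end

section
/- Let k be a field of characteristic p > 0 and suppose u, v ∈ k⟦x,y⟧ satisfy u = x^p(c₀ + f₀ y + x Λ₀) and v = τ₀(y) y^p + e₀ x + x Ω₀ with c₀, f₀, e₀ ∈ k nonzero, τ₀(y) ∈ k⟦y⟧ a unit power series with constant term τ̄₀, Λ₀, Ω₀ ∈ k⟦x,y⟧ and Ω₀ with zero constant term. Let α ∈ k with α ≠ 0 and τ̄₀ + α e₀ ≠ 0, and let σ : k⟦x,y⟧ → k⟦X,Y⟧ be the unique continuous k-algebra homomorphism with σ(x) = X^p(Y + α) and σ(y) = X. Set c₁ = τ̄₀ + α e₀, f₁ = e₀, e₁ = α^p f₀ / c₁^p, and β = α^p c₀ / c₁^p. Then c₁, f₁, e₁, β are all nonzero, and there exist Λ₁ ∈ k⟦X,Y⟧, a unit power series τ₁(Y) ∈ k⟦Y⟧, and Ω₁ ∈ k⟦X,Y⟧ with zero constant term, such that σ(v) = X^p(c₁ + f₁ Y + X Λ₁) and σ(u) = σ(v)^p · (β + τ₁(Y) Y^p + e₁ X + X Ω₁). (Thus the pair (σ(v), σ(u)/σ(v)^p − β) again satisfies the original hypotheses, with new constants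 c₁, f₁, e₁.) -/
open MvPowerSeries

/-!
Every series with zero constant term lies in `(x, y)` and `σ` maps `x, y` into `(X)`, so
`σ F ≡ F(0) mod X`. Hence `σ v = X^p G` with `G ≡ c₁ + e₀ Y mod X`, and
`σ u = X^{p²} (Y + α)^p (c₀ + X P)` with `P(0) = f₀`. In characteristic `p` the Frobenius gives
`G^p ≡ c₁^p + e₀^p Y^p mod X^p` and `(Y + α)^p = Y^p + α^p`, so modulo `X` the quotient
`σ u / σ(v)^p` is `c₀ (Y^p + α^p) / (c₁^p + e₀^p Y^p)`, a series in `Y` alone, which equals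
`β + τ₁(Y) Y^p` with `τ₁(0) = c₀ τ̄₀^p / c₁^{2p}`; its coefficient of `X` is `α^p f₀ / c₁^p`.
-/

section

variable {R : Type*} [CommRing R]

theorem coeff_rename_succEmb_eq_zero (g : MvPowerSeries (Fin 1) R) {d : Fin 2 →₀ ℕ}
    (hd : d 0 ≠ 0) : coeff d (rename (Fin.succEmb 1) g) = 0 := by
  refine coeff_rename_eq_zero _ g fun ⟨x, hx⟩ => hd ?_
  rw [← hx, ← Finsupp.embDomain_eq_mapDomain (Fin.succEmb 1), Finsupp.embDomain_of_notMem_range]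
  simp [Fin.succEmb]

theorem exists_eq_X_zero_mul_add_X_one_mul {F : MvPowerSeries (Fin 2) R}
    (hF : constantCoeff F = 0) : ∃ A B : MvPowerSeries (Fin 2) R, F = X 0 * A + X 1 * B := by
  set e : Fin 1 ↪ Fin 2 := Fin.succEmb 1
  set g := killCompl e F
  have hF_sub : X 0 ∣ F - rename e g := by
    refine X_dvd_iff.mpr fun m hm => ?_
    obtain ⟨x, rfl⟩ : m ∈ Set.range (Finsupp.embDomain e) := by
      rw [Finsupp.mem_range_embDomain_iff]
      intro i hi
      exact ⟨0, by fin_cases i <;> simp_all [e, Fin.succEmb]⟩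
    simp [g, coeff_killCompl]
  have hg : X 0 ∣ g := by
    refine X_dvd_iff.mpr fun m hm => ?_
    obtain rfl : m = 0 := Finsupp.ext fun i => by fin_cases i; exact hm
    simpa [g, coeff_killCompl] using hF
  obtain ⟨A, hA⟩ := hF_sub
  obtain ⟨B, hB⟩ := hg
  refine ⟨A, rename e B, ?_⟩
  rw [← hA, show (X 1 : MvPowerSeries (Fin 2) R) = rename e (X 0) from (rename_X (⇑e) 0).symm,
    ← map_mul, ← hB]
  ring

theorem dvd_map_sub_map_C_constantCoeff {S : Type*} [CommRing S]
    (φ : MvPowerSeries (Fin 2) R →+* S) {d : S} (h₀ : d ∣ φ (X 0)) (h₁ : d ∣ φ (X 1))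
    (F : MvPowerSeries (Fin 2) R) : d ∣ φ F - φ (C (constantCoeff F)) := by
  obtain ⟨A, B, hAB⟩ := exists_eq_X_zero_mul_add_X_one_mul
    (F := F - C (constantCoeff F)) (by simp)
  rw [← map_sub, hAB, map_add, map_mul, map_mul]
  exact dvd_add (dvd_mul_of_dvd_left h₀ _) (dvd_mul_of_dvd_left h₁ _)

end

section

variable {k : Type} [Field k] {p : ℕ} [Fact p.Prime] [CharP k p]

theorem exists_mul_add_C_mul_X_pow_char_eq {σ : Type*} (i : σ)
    {c₀ c₁ e α : k} (hc₀ : c₀ ≠ 0) (hc₁ : c₁ ≠ 0) (hce : c₁ - α * e ≠ 0) :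
    ∃ t : MvPowerSeries σ k, constantCoeff t ≠ 0 ∧
      (C (α ^ p * c₀ / c₁ ^ p) + t * X i ^ p) * (C c₁ + C e * X i) ^ p
        = (X i + C α) ^ p * C c₀ := by
  have : CharP (MvPowerSeries σ k) p := charP_of_injective_algebraMap' k p
  have hp := (Fact.out : p.Prime).ne_zero
  set β := α ^ p * c₀ / c₁ ^ p
  set γ := c₀ - β * e ^ p
  set h : MvPowerSeries σ k := C (c₁ ^ p) + C (e ^ p) * X i ^ p
  have hh : constantCoeff h ≠ 0 := by simpa [h, zero_pow hp] using pow_ne_zero p hc₁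
  have hβ : β * c₁ ^ p = α ^ p * c₀ := div_mul_cancel₀ _ (pow_ne_zero p hc₁)
  have hγ : γ * c₁ ^ p = c₀ * (c₁ - α * e) ^ p := by
    rw [sub_pow_char, mul_pow]
    linear_combination (-e ^ p) * hβ
  have hγ₀ : γ ≠ 0 := fun h0 => by
    simp only [h0, zero_mul] at hγ
    exact mul_ne_zero hc₀ (pow_ne_zero p hce) hγ.symm
  refine ⟨C γ * h⁻¹, by simp [constantCoeff_inv, h, zero_pow hp, hγ₀, hc₁], ?_⟩
  have hinv := MvPowerSeries.inv_mul_cancel h hh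
  rw [add_pow_char, add_pow_char, mul_pow, ← map_pow, ← map_pow]
  linear_combination (norm := skip) (C γ * X i ^ p) * hinv + congrArg C hβ
    + X i ^ p * congrArg C (show β * e ^ p + γ = c₀ by ring)
  simp only [h, map_add, map_mul, map_pow]
  ring

theorem exists_pow_char_mul_eq {c₀ c₁ e α : k} (hc₀ : c₀ ≠ 0) (hc₁ : c₁ ≠ 0)
    (hce : c₁ - α * e ≠ 0) (Λ P : MvPowerSeries (Fin 2) k) :
    ∃ T₁ Ω₁ : MvPowerSeries (Fin 2) k,
      (∀ d : Fin 2 →₀ ℕ, d 0 ≠ 0 → coeff d T₁ = 0) ∧ constantCoeff T₁ ≠ 0 ∧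
      constantCoeff Ω₁ = 0 ∧
      (X 1 + C α) ^ p * (C c₀ + X 0 * P)
        = (C c₁ + C e * X 1 + X 0 * Λ) ^ p *
          (C (α ^ p * c₀ / c₁ ^ p) + T₁ * X 1 ^ p
            + C (α ^ p * constantCoeff P / c₁ ^ p) * X 0 + X 0 * Ω₁) := by
  have : CharP (MvPowerSeries (Fin 2) k) p := charP_of_injective_algebraMap' k p
  have hp₀ := (Fact.out : p.Prime).ne_zero
  obtain ⟨t, ht₀, ht⟩ :=
    exists_mul_add_C_mul_X_pow_char_eq (σ := Fin 1) (p := p) 0 hc₀ hc₁ hce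
  set T₁ := rename (Fin.succEmb 1) t
  set A := C (α ^ p * c₀ / c₁ ^ p) + T₁ * X 1 ^ p
  have hA : A * (C c₁ + C e * X 1) ^ p = (X 1 + C α) ^ p * C c₀ := by
    have h := congrArg (rename (Fin.succEmb 1)) ht
    simp only [map_mul, map_add, map_pow, rename_C, rename_X] at h
    exact h
  set G := C c₁ + C e * X 1 + X 0 * Λ
  have hG : G ^ p = (C c₁ + C e * X 1) ^ p + X 0 ^ p * Λ ^ p := by
    rw [add_pow_char, mul_pow]
  have hGp : constantCoeff (G ^ p) ≠ 0 := by simpa [G] using pow_ne_zero p hc₁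
  have hX : (X 0 : MvPowerSeries (Fin 2) k) ^ p = X 0 * X 0 ^ (p - 1) :=
    (mul_pow_sub_one hp₀ _).symm
  -- `X * N = (Y + α)^p (c₀ + X P) - G^p A`, so `A + X N / G^p` is the quotient.
  set N := (X 1 + C α) ^ p * P - A * X 0 ^ (p - 1) * Λ ^ p
  refine ⟨T₁, N * (G ^ p)⁻¹ - C (α ^ p * constantCoeff P / c₁ ^ p),
    fun d hd => coeff_rename_succEmb_eq_zero t hd, by simpa [T₁] using ht₀, ?_, ?_⟩
  · simp [N, G, constantCoeff_inv, zero_pow (Nat.sub_ne_zero_of_lt (Fact.out : p.Prime).one_lt)]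
    ring
  · linear_combination (-(X 0 * N)) * MvPowerSeries.mul_inv_cancel _ hGp - A * hG
      - A * Λ ^ p * hX - hA

end

theorem stmt7_general (k : Type) [Field k] (p : ℕ) (hp : p.Prime) [CharP k p]
    (u v Λ Ω T : MvPowerSeries (Fin 2) k) (c₀ f₀ e₀ : k)
    (hc : c₀ ≠ 0) (hf : f₀ ≠ 0) (he : e₀ ≠ 0)
    (hTu : MvPowerSeries.constantCoeff (σ := Fin 2) (R := k) T ≠ 0)
    (hΩ : MvPowerSeries.constantCoeff (σ := Fin 2) (R := k) Ω = 0)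
    -- `u = x^p (c₀ + f₀ y + x Λ₀)`:
    (hu : u = (MvPowerSeries.X 0) ^ p *
      (MvPowerSeries.C (σ := Fin 2) (R := k) c₀ + MvPowerSeries.C (σ := Fin 2) (R := k) f₀ * MvPowerSeries.X 1
        + MvPowerSeries.X 0 * Λ))
    -- `v = τ₀(y) y^p + e₀ x + x Ω₀`:
    (hv : v = T * (MvPowerSeries.X 1) ^ p
      + MvPowerSeries.C (σ := Fin 2) (R := k) e₀ * MvPowerSeries.X 0 + MvPowerSeries.X 0 * Ω)
    (α : k) (hα : α ≠ 0)
    (hα2 : MvPowerSeries.constantCoeff (σ := Fin 2) (R := k) T + α * e₀ ≠ 0)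
    (σ : MvPowerSeries (Fin 2) k →+* MvPowerSeries (Fin 2) k)
    (hσ : IsSubstitutionHom k σ
      ((MvPowerSeries.X 0) ^ p * (MvPowerSeries.X 1 + MvPowerSeries.C (σ := Fin 2) (R := k) α))
      (MvPowerSeries.X 0))
    (c₁ f₁ e₁ β : k)
    (hc₁ : c₁ = MvPowerSeries.constantCoeff (σ := Fin 2) (R := k) T + α * e₀)
    (hf₁ : f₁ = e₀) (he₁ : e₁ = α ^ p * f₀ / c₁ ^ p)
    (hβ : β = α ^ p * c₀ / c₁ ^ p) :
    c₁ ≠ 0 ∧ f₁ ≠ 0 ∧ e₁ ≠ 0 ∧ β ≠ 0 ∧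
    ∃ Λ₁ T₁ Ω₁ : MvPowerSeries (Fin 2) k,
      -- `T₁` is a unit power series in the second variable `Y` alone:
      (∀ d : Fin 2 →₀ ℕ, d 0 ≠ 0 → MvPowerSeries.coeff (R := k) d T₁ = 0) ∧
      MvPowerSeries.constantCoeff (σ := Fin 2) (R := k) T₁ ≠ 0 ∧
      MvPowerSeries.constantCoeff (σ := Fin 2) (R := k) Ω₁ = 0 ∧
      σ v = (MvPowerSeries.X 0) ^ p *
        (MvPowerSeries.C (σ := Fin 2) (R := k) c₁ + MvPowerSeries.C (σ := Fin 2) (R := k) f₁ * MvPowerSeries.X 1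
          + MvPowerSeries.X 0 * Λ₁) ∧
      σ u = (σ v) ^ p *
        (MvPowerSeries.C (σ := Fin 2) (R := k) β + T₁ * (MvPowerSeries.X 1) ^ p
          + MvPowerSeries.C (σ := Fin 2) (R := k) e₁ * MvPowerSeries.X 0
          + MvPowerSeries.X 0 * Ω₁) := by
  obtain ⟨hσC, hσx, hσy, -⟩ := hσ
  have := Fact.mk hp
  have hc₁_ne : c₁ ≠ 0 := hc₁ ▸ hα2
  have hαp : α ^ p ≠ 0 := pow_ne_zero p hα
  subst f₁ e₁ β
  refine ⟨hc₁_ne, he, div_ne_zero (mul_ne_zero hαp hf) (pow_ne_zero p hc₁_ne),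
    div_ne_zero (mul_ne_zero hαp hc) (pow_ne_zero p hc₁_ne), ?_⟩
  have hσ_sub_C : ∀ F, X 0 ∣ σ F - C (constantCoeff F) := fun F => by
    simpa only [hσC] using dvd_map_sub_map_C_constantCoeff σ
      (hσx ▸ dvd_mul_of_dvd_left (dvd_pow_self _ hp.ne_zero) _) (hσy ▸ dvd_rfl) F
  obtain ⟨ST, hST⟩ := hσ_sub_C T
  obtain ⟨SΩ, hSΩ⟩ := hσ_sub_C Ω
  rw [hΩ, map_zero, sub_zero] at hSΩ
  set Λ₁ := ST + (X 1 + C α) * SΩ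
  have hσv : σ v = X 0 ^ p * (C c₁ + C e₀ * X 1 + X 0 * Λ₁) := by
    rw [hv, hc₁]
    simp only [map_add, map_mul, map_pow, hσC, hσx, hσy]
    linear_combination X 0 ^ p * hST + X 0 ^ p * (X 1 + C α) * hSΩ
  set P := C f₀ + X 0 ^ (p - 1) * (X 1 + C α) * σ Λ
  have hP : constantCoeff P = f₀ := by
    simp [P, zero_pow (Nat.sub_ne_zero_of_lt hp.one_lt)]
  have hce : c₁ - α * e₀ ≠ 0 := by rwa [hc₁, add_sub_cancel_right]
  obtain ⟨T₁, Ω₁, hT₁, hT₁₀, hΩ₁, hW⟩ :=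
    exists_pow_char_mul_eq hc hc₁_ne hce Λ₁ P
  refine ⟨Λ₁, T₁, Ω₁, hT₁, hT₁₀, hΩ₁, hσv, ?_⟩
  have hσu : σ u = (X 0 ^ p) ^ p * ((X 1 + C α) ^ p * (C c₀ + X 0 * P)) := by
    have hX : (X 0 : MvPowerSeries (Fin 2) k) ^ p = X 0 * X 0 ^ (p - 1) :=
      (mul_pow_sub_one hp.ne_zero _).symm
    rw [hu]
    simp only [map_add, map_mul, map_pow, hσC, hσx, hσy]
    rw [mul_pow]
    linear_combination (X 0 ^ p) ^ p * (X 1 + C α) ^ p * (X 1 + C α) * σ Λ * hX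
  rw [hσu, hW, hσv, mul_pow, hP]
  ring

/-- the inductive step of Lemma 3.1 of the paper.
With `u, v` as in the hypotheses, `α ∈ k` with `α ≠ 0` and
`τ̄₀ + α e₀ ≠ 0`, and `σ : k⟦x,y⟧ → k⟦X,Y⟧` the substitution
`x ↦ X^p (Y + α)`, `y ↦ X`, setting `c₁ = τ̄₀ + α e₀`, `f₁ = e₀`,
`e₁ = α^p f₀ / c₁^p` and `β = α^p c₀ / c₁^p`, all of `c₁, f₁, e₁, β` are
nonzero and `σ(v) = X^p (c₁ + f₁ Y + X Λ₁)`,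
`σ(u) = σ(v)^p (β + τ₁(Y) Y^p + e₁ X + X Ω₁)` for suitable `Λ₁`, a unit
series `τ₁(Y) ∈ k⟦Y⟧` and `Ω₁` with zero constant term. -/
theorem stmt7 (k : Type) [Field k] (p : ℕ) (hp : p.Prime) [CharP k p]
    (u v Λ Ω T : MvPowerSeries (Fin 2) k) (c₀ f₀ e₀ : k)
    (hc : c₀ ≠ 0) (hf : f₀ ≠ 0) (he : e₀ ≠ 0)
    -- `T` is a unit power series in `y` alone (`τ₀(y)`):
    (hTy : ∀ d : Fin 2 →₀ ℕ, d 0 ≠ 0 → MvPowerSeries.coeff (R := k) d T = 0)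
    (hTu : MvPowerSeries.constantCoeff (σ := Fin 2) (R := k) T ≠ 0)
    (hΩ : MvPowerSeries.constantCoeff (σ := Fin 2) (R := k) Ω = 0)
    -- `u = x^p (c₀ + f₀ y + x Λ₀)`:
    (hu : u = (MvPowerSeries.X 0) ^ p *
      (MvPowerSeries.C (σ := Fin 2) (R := k) c₀ + MvPowerSeries.C (σ := Fin 2) (R := k) f₀ * MvPowerSeries.X 1
        + MvPowerSeries.X 0 * Λ))
    -- `v = τ₀(y) y^p + e₀ x + x Ω₀`:
    (hv : v = T * (MvPowerSeries.X 1) ^ p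
      + MvPowerSeries.C (σ := Fin 2) (R := k) e₀ * MvPowerSeries.X 0 + MvPowerSeries.X 0 * Ω)
    (α : k) (hα : α ≠ 0)
    (hα2 : MvPowerSeries.constantCoeff (σ := Fin 2) (R := k) T + α * e₀ ≠ 0)
    (σ : MvPowerSeries (Fin 2) k →+* MvPowerSeries (Fin 2) k)
    (hσ : IsSubstitutionHom k σ
      ((MvPowerSeries.X 0) ^ p * (MvPowerSeries.X 1 + MvPowerSeries.C (σ := Fin 2) (R := k) α))
      (MvPowerSeries.X 0))
    (c₁ f₁ e₁ β : k)
    (hc₁ : c₁ = MvPowerSeries.constantCoeff (σ := Fin 2) (R := k) T + α * e₀)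
    (hf₁ : f₁ = e₀) (he₁ : e₁ = α ^ p * f₀ / c₁ ^ p)
    (hβ : β = α ^ p * c₀ / c₁ ^ p) :
    c₁ ≠ 0 ∧ f₁ ≠ 0 ∧ e₁ ≠ 0 ∧ β ≠ 0 ∧
    ∃ Λ₁ T₁ Ω₁ : MvPowerSeries (Fin 2) k,
      -- `T₁` is a unit power series in the second variable `Y` alone:
      (∀ d : Fin 2 →₀ ℕ, d 0 ≠ 0 → MvPowerSeries.coeff (R := k) d T₁ = 0) ∧
      MvPowerSeries.constantCoeff (σ := Fin 2) (R := k) T₁ ≠ 0 ∧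
      MvPowerSeries.constantCoeff (σ := Fin 2) (R := k) Ω₁ = 0 ∧
      σ v = (MvPowerSeries.X 0) ^ p *
        (MvPowerSeries.C (σ := Fin 2) (R := k) c₁ + MvPowerSeries.C (σ := Fin 2) (R := k) f₁ * MvPowerSeries.X 1
          + MvPowerSeries.X 0 * Λ₁) ∧
      σ u = (σ v) ^ p *
        (MvPowerSeries.C (σ := Fin 2) (R := k) β + T₁ * (MvPowerSeries.X 1) ^ p
          + MvPowerSeries.C (σ := Fin 2) (R := k) e₁ * MvPowerSeries.X 0
          + MvPowerSeries.X 0 * Ω₁) :=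
  stmt7_general k p hp u v Λ Ω T c₀ f₀ e₀ hc hf he hTu hΩ hu hv α hα hα2 σ hσ c₁ f₁ e₁ β hc₁ hf₁ he₁
    hβ
end

section
/- Let k be a field of characteristic p > 0 and suppose u, v ∈ k⟦x,y⟧ satisfy u = x^p(c₀ + f₀ y + x Λ₀) and v = τ₀(y) y^p + e₀ x + x Ω₀ with c₀, f₀, e₀ ∈ k nonzero, τ₀(y) ∈ k⟦y⟧ a unit power series, Λ₀, Ω₀ ∈ k⟦x,y⟧ and Ω₀ with zero constant term. Then for every one-variable power series ψ(T) ∈ k⟦T⟧ with ψ(0) = 0, the series u − ψ(v) ∈ k⟦x,y⟧ is nonzero, and if r denotes its order (the least total degree of a monomial occurring with nonzero coefficient), then the coefficient of y^r in u − ψ(v) is zero; equivalently, x divides the leading form (lowest-degree homogeneous part) of u − ψ(v). -/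
open MvPowerSeries

/-!
Let `m` be the order of `ψ = ∑ bₙ Tⁿ`. Modulo `x` we have `v ≡ τ₀(y) y^p`, so the pure-`y` part of `ψ(v)`
starts in degree `≥ p m`, while `u` has no pure-`y` monomials at all. It therefore suffices to
exhibit a monomial of degree `< p m` occurring in `u - ψ(v)`: `x^m` (coefficient `-bₘ e₀^m`)
if `m < p`, `x^p` (coefficient `c₀`) if `m > p`, and `x^p y` (coefficient `f₀`) if `m = p`,
since in characteristic `p` Frobenius gives `v^p = e₀^p x^p + (terms of order ≥ 2p)`.
-/

namespace MvPowerSeries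

variable {σ R : Type*} [CommRing R]

theorem coeff_X_pow_mul_of_lt {s : σ} {n : ℕ} {d : σ →₀ ℕ} (hd : d s < n)
    (G : MvPowerSeries σ R) : coeff d (X s ^ n * G) = 0 := by
  rw [X_pow_eq, coeff_monomial_mul, if_neg (by rw [Finsupp.single_le_iff]; omega)]

theorem coeff_X_mul_of_eq_zero {s : σ} {d : σ →₀ ℕ} (hd : d s = 0) (G : MvPowerSeries σ R) :
    coeff d (X s * G) = 0 := by
  simpa using coeff_X_pow_mul_of_lt (n := 1) (by omega) G

theorem coeff_single_add_X_pow_mul (s : σ) (n : ℕ) (d : σ →₀ ℕ) (G : MvPowerSeries σ R) :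
    coeff (Finsupp.single s n + d) (X s ^ n * G) = coeff d G := by
  rw [X_pow_eq, coeff_monomial_mul, if_pos le_self_add, add_tsub_cancel_left, one_mul]

theorem C_mul_X_pow (a : R) (s : σ) (n : ℕ) :
    (C a * X s) ^ n = monomial (Finsupp.single s n) (a ^ n) := by
  rw [mul_pow, ← map_pow, X_pow_eq, ← monomial_zero_eq_C_apply, monomial_mul_monomial,
    zero_add, mul_one]

theorem one_le_order_X (s : σ) : 1 ≤ (X s : MvPowerSeries σ R).order := by
  rw [one_le_order_iff_constCoeff_eq_zero, constantCoeff_X]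

theorem one_le_order_C_mul_X (a : R) (s : σ) : 1 ≤ (C a * X s).order := by
  rw [one_le_order_iff_constCoeff_eq_zero, map_mul, constantCoeff_X, mul_zero]

theorem one_le_order_C_mul_X_add (a : R) (s : σ) {g : MvPowerSeries σ R} (hg : 1 ≤ g.order) :
    1 ≤ (C a * X s + g).order :=
  le_trans (le_min (one_le_order_C_mul_X a s) hg) min_order_le_add

theorem two_le_order_mul_X_pow_add_X_mul (T : MvPowerSeries σ R) (s t : σ) {p : ℕ} (hp : 2 ≤ p)
    {Ω : MvPowerSeries σ R} (hΩ : constantCoeff Ω = 0) : 2 ≤ (T * X t ^ p + X s * Ω).order := by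
  refine le_trans (le_min ?_ ?_) min_order_le_add
  · calc (2 : ℕ∞) ≤ p • 1 := by simpa using hp
      _ ≤ p • (X t : MvPowerSeries σ R).order := by gcongr; exact one_le_order_X t
      _ ≤ (X t ^ p).order := le_order_pow p
      _ ≤ T.order + (X t ^ p).order := le_add_self
      _ ≤ _ := le_order_mul
  · calc (2 : ℕ∞) = 1 + 1 := by norm_num
      _ ≤ (X s : MvPowerSeries σ R).order + Ω.order :=
          add_le_add (one_le_order_X s) (one_le_order_iff_constCoeff_eq_zero.2 hΩ)
      _ ≤ _ := le_order_mul

theorem le_order_pow_sub_pow {a b : MvPowerSeries σ R} (ha : 1 ≤ a.order) (hb : 1 ≤ b.order)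
    (n : ℕ) : (a - b).order + n ≤ (a ^ (n + 1) - b ^ (n + 1)).order := by
  induction n with
  | zero => simp
  | succ n ih =>
    have hsplit : a ^ (n + 2) - b ^ (n + 2) =
        a ^ (n + 1) * (a - b) + (a ^ (n + 1) - b ^ (n + 1)) * b := by ring
    have hpow : ((n + 1 : ℕ) : ℕ∞) ≤ (a ^ (n + 1)).order :=
      le_trans (by simpa using nsmul_le_nsmul_right ha (n + 1)) (le_order_pow _)
    rw [hsplit]
    refine le_trans (le_min ?_ ?_) min_order_le_add
    · calc (a - b).order + ↑(n + 1) ≤ (a ^ (n + 1)).order + (a - b).order := by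
            rw [add_comm]; exact add_le_add_left hpow _
        _ ≤ _ := le_order_mul
    · calc (a - b).order + ↑(n + 1) = ((a - b).order + n) + 1 := by push_cast; ring
        _ ≤ (a ^ (n + 1) - b ^ (n + 1)).order + b.order := by gcongr
        _ ≤ _ := le_order_mul

theorem coeff_C_mul_X_add_pow_of_degree_le {a : R} {s : σ} {g : MvPowerSeries σ R}
    (hg : 2 ≤ g.order) {n : ℕ} {d : σ →₀ ℕ} (hd : d.degree ≤ n) :
    coeff d ((C a * X s + g) ^ n) = coeff d (monomial (Finsupp.single s n) (a ^ n)) := by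
  rw [← C_mul_X_pow, ← sub_eq_zero, ← map_sub]
  cases n with
  | zero => simp
  | succ n =>
    refine coeff_of_lt_order (lt_of_lt_of_le ?_ (le_order_pow_sub_pow
      (one_le_order_C_mul_X_add a s (one_le_two.trans hg)) (one_le_order_C_mul_X a s) n))
    rw [add_sub_cancel_left]
    calc (d.degree : ℕ∞) < 2 + n := by norm_cast; omega
      _ ≤ g.order + n := by gcongr

theorem coeff_C_mul_X_add_pow_char_of_degree_lt (p : ℕ) [Fact p.Prime] [CharP R p] {a : R}
    {s : σ} {g : MvPowerSeries σ R} (hg : 2 ≤ g.order) {d : σ →₀ ℕ} (hd : d.degree < 2 * p) :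
    coeff d ((C a * X s + g) ^ p) = coeff d (monomial (Finsupp.single s p) (a ^ p)) := by
  have : CharP (MvPowerSeries σ R) p :=
    charP_of_injective_ringHom (f := C) (fun a b h => by simpa using congrArg constantCoeff h) p
  have hgp : (d.degree : ℕ∞) < (g ^ p).order :=
    calc (d.degree : ℕ∞) < p • 2 := by rw [nsmul_eq_mul]; norm_cast; omega
      _ ≤ p • g.order := by gcongr
      _ ≤ (g ^ p).order := le_order_pow p
  rw [add_pow_char, C_mul_X_pow, map_add, coeff_of_lt_order hgp, add_zero]

theorem coeff_apply_eq_sum_of_degree_lt {ε : PowerSeries R →+* MvPowerSeries σ R}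
    {w : MvPowerSeries σ R} (hC : ∀ c, ε (PowerSeries.C c) = C c) (hX : ε PowerSeries.X = w)
    (hw : 1 ≤ w.order) (ψ : PowerSeries R) {N : ℕ} {d : σ →₀ ℕ} (hd : d.degree < N) :
    coeff d (ε ψ) = ∑ n ∈ Finset.range N, PowerSeries.coeff n ψ * coeff d (w ^ n) := by
  -- No continuity of `ε` is needed: `ψ = Xᴺ * tail + trunc N ψ` and `ε (Xᴺ * tail) = wᴺ * ε tail`.
  have hpoly : ε.comp Polynomial.coeToPowerSeries.ringHom = Polynomial.eval₂RingHom C w :=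
    Polynomial.ringHom_ext (fun c => by simp [hC]) (by simp [hX])
  set tail := PowerSeries.mk fun i ↦ PowerSeries.coeff (i + N) ψ
  have htail : coeff d (w ^ N * ε tail) = 0 := by
    refine coeff_of_lt_order (lt_of_lt_of_le ?_ le_order_mul)
    calc (d.degree : ℕ∞) < N • 1 := by simpa using hd
      _ ≤ N • w.order := by gcongr
      _ ≤ (w ^ N).order := le_order_pow N
      _ ≤ (w ^ N).order + (ε tail).order := le_self_add
  conv_lhs => rw [PowerSeries.eq_X_pow_mul_shift_add_trunc N ψ]
  rw [map_add, map_mul, map_pow, hX, map_add, htail, zero_add]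
  have := DFunLike.congr_fun hpoly (PowerSeries.trunc N ψ)
  simp only [RingHom.comp_apply, Polynomial.coeToPowerSeries.ringHom_apply,
    Polynomial.coe_eval₂RingHom] at this
  rw [this, PowerSeries.eval₂_trunc_eq_sum_range, map_sum]
  simp_rw [coeff_C_mul]

theorem coeff_single_pow_eq_zero_of_lt {s t : σ} (hst : s ≠ t) {p : ℕ} {v T : MvPowerSeries σ R}
    (hv : X s ∣ v - T * X t ^ p) {n l : ℕ} (hl : l < p * n) :
    coeff (Finsupp.single t l) (v ^ n) = 0 := by
  obtain ⟨c, hc⟩ := hv.trans (sub_dvd_pow_sub_pow v (T * X t ^ p) n)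
  have hvn : v ^ n = X t ^ (p * n) * T ^ n + X s * c := by
    rw [← hc]
    ring
  rw [hvn, map_add, coeff_X_pow_mul_of_lt (by simpa using hl),
    coeff_X_mul_of_eq_zero (by simp [hst]), add_zero]

theorem coeff_single_apply_eq_zero_of_lt {ε : PowerSeries R →+* MvPowerSeries σ R}
    {v T : MvPowerSeries σ R} (hC : ∀ c, ε (PowerSeries.C c) = C c) (hX : ε PowerSeries.X = v)
    (hv₁ : 1 ≤ v.order) {s t : σ} (hst : s ≠ t) {p : ℕ} (hv : X s ∣ v - T * X t ^ p)
    {ψ : PowerSeries R} {m l : ℕ} (hψ : ∀ j < m, PowerSeries.coeff j ψ = 0) (hl : l < p * m) :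
    coeff (Finsupp.single t l) (ε ψ) = 0 := by
  rw [coeff_apply_eq_sum_of_degree_lt hC hX hv₁ ψ (N := l + 1) (by simp)]
  refine Finset.sum_eq_zero fun n _ => ?_
  rcases lt_or_ge n m with hn | hn
  · rw [hψ n hn, zero_mul]
  · rw [coeff_single_pow_eq_zero_of_lt hst hv (hl.trans_le (Nat.mul_le_mul_left p hn)), mul_zero]

end MvPowerSeries

section

variable {k : Type} [Field k] {p : ℕ} {c₀ f₀ e₀ : k} {Λ g : MvPowerSeries (Fin 2) k}
  {ε : PowerSeries k →+* MvPowerSeries (Fin 2) k} {ψ : PowerSeries k} {m : ℕ}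

theorem coeff_single_X_pow_mul_C_add :
    coeff (Finsupp.single 0 p) (X 0 ^ p * (C c₀ + C f₀ * X 1 + X 0 * Λ)) = c₀ := by
  rw [← add_zero (Finsupp.single 0 p), coeff_single_add_X_pow_mul]
  simp

theorem coeff_single_add_single_X_pow_mul_C_add :
    coeff (Finsupp.single 0 p + Finsupp.single 1 1)
      (X 0 ^ p * (C c₀ + C f₀ * X 1 + X 0 * Λ)) = f₀ := by
  rw [coeff_single_add_X_pow_mul]
  simp [coeff_C, coeff_X, coeff_X_mul_of_eq_zero]

theorem exists_degree_lt_coeff_sub_apply_ne_zero (hp : p.Prime) [CharP k p] (hc : c₀ ≠ 0)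
    (hf : f₀ ≠ 0) (he : e₀ ≠ 0) (hg : 2 ≤ g.order) (hε : IsSubstitutionHom₁ k ε (C e₀ * X 0 + g))
    (hm : 1 ≤ m) (hψm : PowerSeries.coeff m ψ ≠ 0) (hψ : ∀ j < m, PowerSeries.coeff j ψ = 0) :
    ∃ d : Fin 2 →₀ ℕ, d.degree < p * m ∧
      coeff d (X 0 ^ p * (C c₀ + C f₀ * X 1 + X 0 * Λ) - ε ψ) ≠ 0 := by
  have hp2 := hp.two_le
  have hv₁ := one_le_order_C_mul_X_add e₀ 0 (one_le_two.trans hg)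
  have hsum (N : ℕ) (d : Fin 2 →₀ ℕ) :=
    coeff_apply_eq_sum_of_degree_lt (N := N) (d := d) hε.1 hε.2.1 hv₁ ψ
  have hlow (d : Fin 2 →₀ ℕ) :
      ∀ n ∈ Finset.range m, PowerSeries.coeff n ψ * coeff d ((C e₀ * X 0 + g) ^ n) = 0 :=
    fun n hn => by rw [hψ n (Finset.mem_range.mp hn), zero_mul]
  rcases lt_trichotomy m p with hmp | rfl | hpm
  · refine ⟨Finsupp.single 0 m, by simp; nlinarith, ?_⟩
    rw [map_sub, coeff_X_pow_mul_of_lt (by simpa using hmp), zero_sub, neg_ne_zero,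
      hsum (m + 1) _ (by simp), Finset.sum_range_succ, Finset.sum_eq_zero (hlow _), zero_add,
      coeff_C_mul_X_add_pow_of_degree_le hg (by simp), coeff_monomial_same]
    exact mul_ne_zero hψm (pow_ne_zero _ he)
  · have : Fact m.Prime := ⟨hp⟩
    refine ⟨Finsupp.single 0 m + Finsupp.single 1 1, by simp; nlinarith, ?_⟩
    rw [map_sub, coeff_single_add_single_X_pow_mul_C_add, hsum (m + 2) _ (by simp),
      Finset.sum_range_succ, Finset.sum_range_succ, Finset.sum_eq_zero (hlow _),
      coeff_C_mul_X_add_pow_char_of_degree_lt m hg (by simp; omega),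
      coeff_C_mul_X_add_pow_of_degree_le hg (by simp), coeff_monomial, coeff_monomial, if_neg,
      if_neg]
    · simpa using hf
    all_goals exact fun h => by simpa using DFunLike.congr_fun h 1
  · refine ⟨Finsupp.single 0 p, by simp; nlinarith, ?_⟩
    rw [map_sub, hsum (p + 1) _ (by simp), Finset.sum_eq_zero, sub_zero,
      coeff_single_X_pow_mul_C_add]
    · exact hc
    · intro n hn
      rw [hψ n (by simp at hn; omega), zero_mul]

end

theorem stmt10_general (k : Type) [Field k] (p : ℕ) (hp : p.Prime) [CharP k p]
    (u v Λ Ω T : MvPowerSeries (Fin 2) k) (c₀ f₀ e₀ : k)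
    (hc : c₀ ≠ 0) (hf : f₀ ≠ 0) (he : e₀ ≠ 0)
    (hΩ : MvPowerSeries.constantCoeff (σ := Fin 2) (R := k) Ω = 0)
    -- `u = x^p (c₀ + f₀ y + x Λ₀)`:
    (hu : u = (MvPowerSeries.X 0) ^ p *
      (MvPowerSeries.C (σ := Fin 2) (R := k) c₀ + MvPowerSeries.C (σ := Fin 2) (R := k) f₀ * MvPowerSeries.X 1
        + MvPowerSeries.X 0 * Λ))
    -- `v = τ₀(y) y^p + e₀ x + x Ω₀`:
    (hv : v = T * (MvPowerSeries.X 1) ^ p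
      + MvPowerSeries.C (σ := Fin 2) (R := k) e₀ * MvPowerSeries.X 0 + MvPowerSeries.X 0 * Ω)
    (ψ : PowerSeries k) (hψ : PowerSeries.constantCoeff (R := k) ψ = 0)
    (ε : PowerSeries k →+* MvPowerSeries (Fin 2) k)
    (hε : IsSubstitutionHom₁ k ε v) :
    u - ε ψ ≠ 0 ∧
    ∀ r : ℕ,
      -- if `r` is the order of `u - ψ(v)` …
      ((∀ d : Fin 2 →₀ ℕ, d 0 + d 1 < r → MvPowerSeries.coeff (R := k) d (u - ε ψ) = 0) ∧
        (∃ d : Fin 2 →₀ ℕ, d 0 + d 1 = r ∧ MvPowerSeries.coeff (R := k) d (u - ε ψ) ≠ 0)) →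
      -- … then the coefficient of `y^r` in `u - ψ(v)` is zero:
      MvPowerSeries.coeff (R := k) (Finsupp.single (1 : Fin 2) r) (u - ε ψ) = 0 := by
  have hg := two_le_order_mul_X_pow_add_X_mul T 0 1 hp.two_le hΩ
  have hvg : v = C e₀ * X 0 + (T * X 1 ^ p + X 0 * Ω) := by rw [hv]; ring
  have hvx : X 0 ∣ v - T * X 1 ^ p := ⟨C e₀ + Ω, by rw [hv]; ring⟩
  have hv₁ : 1 ≤ v.order := hvg ▸ one_le_order_C_mul_X_add e₀ 0 (one_le_two.trans hg)
  obtain ⟨d, hd, hy⟩ : ∃ d : Fin 2 →₀ ℕ, coeff d (u - ε ψ) ≠ 0 ∧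
      ∀ l ≤ d.degree, coeff (Finsupp.single 1 l) (ε ψ) = 0 := by
    rcases eq_or_ne ψ 0 with rfl | hψ₀
    · refine ⟨Finsupp.single 0 p, ?_, fun l _ => by simp⟩
      rwa [map_zero, sub_zero, hu, coeff_single_X_pow_mul_C_add]
    · have hψm := PowerSeries.coeff_order hψ₀
      set m := ψ.order.toNat
      have hψlow (j : ℕ) (hj : j < m) : PowerSeries.coeff j ψ = 0 :=
        PowerSeries.coeff_of_lt_order_toNat j hj
      have hm : 1 ≤ m := Nat.one_le_iff_ne_zero.2 fun h₀ => hψm (by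
        rw [h₀, PowerSeries.coeff_zero_eq_constantCoeff_apply, hψ])
      obtain ⟨d, hdeg, hd⟩ := exists_degree_lt_coeff_sub_apply_ne_zero (Λ := Λ) hp hc hf he hg
        (hvg ▸ hε) hm hψm hψlow
      exact ⟨d, hu ▸ hd, fun l hl => coeff_single_apply_eq_zero_of_lt hε.1 hε.2.1 hv₁
        (by decide) hvx hψlow (by omega)⟩
  refine ⟨fun h => hd (by rw [h, map_zero]), fun r ⟨hlow, _⟩ => ?_⟩
  have hr : r ≤ d.degree := by
    by_contra! h
    exact hd (hlow d (by rwa [Finsupp.degree_eq_sum, Fin.sum_univ_two] at h))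
  rw [map_sub, hy r hr, hu, coeff_X_pow_mul_of_lt (by simpa using hp.pos), sub_zero]

/-- With `u, v` as in the hypotheses, for every
one-variable power series `ψ(T) ∈ k⟦T⟧` with `ψ(0) = 0`, the series
`u - ψ(v)` is nonzero, and if `r` is its order then the coefficient of
`y^r` in `u - ψ(v)` vanishes (equivalently, `x` divides the leading form
of `u - ψ(v)`). -/
theorem stmt10 (k : Type) [Field k] (p : ℕ) (hp : p.Prime) [CharP k p]
    (u v Λ Ω T : MvPowerSeries (Fin 2) k) (c₀ f₀ e₀ : k)
    (hc : c₀ ≠ 0) (hf : f₀ ≠ 0) (he : e₀ ≠ 0)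
    -- `T` is a unit power series in `y` alone (`τ₀(y)`):
    (hTy : ∀ d : Fin 2 →₀ ℕ, d 0 ≠ 0 → MvPowerSeries.coeff (R := k) d T = 0)
    (hTu : MvPowerSeries.constantCoeff (σ := Fin 2) (R := k) T ≠ 0)
    (hΩ : MvPowerSeries.constantCoeff (σ := Fin 2) (R := k) Ω = 0)
    -- `u = x^p (c₀ + f₀ y + x Λ₀)`:
    (hu : u = (MvPowerSeries.X 0) ^ p *
      (MvPowerSeries.C (σ := Fin 2) (R := k) c₀ + MvPowerSeries.C (σ := Fin 2) (R := k) f₀ * MvPowerSeries.X 1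
        + MvPowerSeries.X 0 * Λ))
    -- `v = τ₀(y) y^p + e₀ x + x Ω₀`:
    (hv : v = T * (MvPowerSeries.X 1) ^ p
      + MvPowerSeries.C (σ := Fin 2) (R := k) e₀ * MvPowerSeries.X 0 + MvPowerSeries.X 0 * Ω)
    (ψ : PowerSeries k) (hψ : PowerSeries.constantCoeff (R := k) ψ = 0)
    (ε : PowerSeries k →+* MvPowerSeries (Fin 2) k)
    (hε : IsSubstitutionHom₁ k ε v) :
    u - ε ψ ≠ 0 ∧
    ∀ r : ℕ,
      -- if `r` is the order of `u - ψ(v)` …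
      ((∀ d : Fin 2 →₀ ℕ, d 0 + d 1 < r → MvPowerSeries.coeff (R := k) d (u - ε ψ) = 0) ∧
        (∃ d : Fin 2 →₀ ℕ, d 0 + d 1 = r ∧ MvPowerSeries.coeff (R := k) d (u - ε ψ) ≠ 0)) →
      -- … then the coefficient of `y^r` in `u - ψ(v)` is zero:
      MvPowerSeries.coeff (R := k) (Finsupp.single (1 : Fin 2) r) (u - ε ψ) = 0 :=
  stmt10_general k p hp u v Λ Ω T c₀ f₀ e₀ hc hf he hΩ hu hv ψ hψ ε hε
end

section
/- Let k be a field of characteristic p > 0 and suppose u, v ∈ k⟦x,y⟧ satisfy u = x^p(c₀ + f₀ y + x Λ₀) and v = τ₀(y) y^p + e₀ x + x Ω₀ with c₀, f₀, e₀ ∈ k nonzero, τ₀(y) ∈ k⟦y⟧ a unit power series, Λ₀, Ω₀ ∈ k⟦x,y⟧ and Ω₀ with zero constant term. Fix an integer i with 1 ≤ i < p and let σ_i : k⟦x,y⟧ → k⟦X,Y⟧ be the unique continuous k-algebra homomorphism with σ_i(x) = X·Y^i and σ_i(y) = Y. Then for every one-variable power series ψ(T) ∈ k⟦T⟧ with ψ(0)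 = 0, every unit λ ∈ k⟦X,Y⟧, and every natural number a, we have σ_i(u) − ψ(σ_i(v)) ≠ λ·Y^a in k⟦X,Y⟧. -/
open MvPowerSeries

/-!
Write `σᵢ(v) = t Y^p + X Y^i W` with `t(0) ≠ 0`, `W(0) = e₀`, and `ψ = T^m g` with `m ≥ 1`,
`g(0) ≠ 0`. Reading `σᵢ(u) - σᵢ(v)^m g(σᵢ(v)) = λ Y^a` modulo `X` forces `a = p m`; its
coefficient of `X Y^(p(m-1)+i)` is `m t(0)^(m-1) e₀ g(0)`, so `p ∣ m` and `a ≥ p²`. Finally, by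
the chain rule the Jacobian of `σᵢ(v)` and `ψ(σᵢ(v)) = σᵢ(u) - λ Y^a` vanishes; as `a ≡ 0 mod p`,
its coefficient of `X^p Y^(ip+i)` is `f₀ e₀ ≠ 0` up to sign.
-/

namespace MvPowerSeries

variable {σ R : Type*}

theorem constantCoeff_eq_zero_of_X_pow_mul_eq [CommSemiring R] {i j : σ} (hij : i ≠ j)
    {a b : ℕ} {F G H : MvPowerSeries σ R}
    (h : X i ^ a * X j ^ b * F = X i ^ (a + 1) * G + X j ^ (b + 1) * H) :
    constantCoeff F = 0 := by
  classical
  have hc := congrArg (coeff (Finsupp.single i a + Finsupp.single j b)) h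
  simp only [X_pow_eq, monomial_mul_monomial, one_mul, map_add, coeff_monomial_mul,
    le_refl, if_true, tsub_self, coeff_zero_eq_constantCoeff] at hc
  rw [hc, if_neg, if_neg, add_zero]
  · intro hle
    simpa [Finsupp.single_apply, hij.symm] using hle j
  · intro hle
    simpa [Finsupp.single_apply, hij] using hle i

theorem not_X_dvd_mul_X_pow [CommSemiring R] {i j : σ} (hij : i ≠ j) {a : ℕ}
    {F : MvPowerSeries σ R} (hF : constantCoeff F ≠ 0) : ¬ X i ∣ F * X j ^ a := by
  rintro ⟨G, hG⟩
  exact hF (constantCoeff_eq_zero_of_X_pow_mul_eq hij (a := 0) (G := G) (H := 0)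
    (by rw [pow_zero, one_mul, mul_comm, hG]; ring))

theorem eq_of_X_dvd_mul_X_pow_sub_mul_X_pow [CommRing R] {i j : σ} (hij : i ≠ j) {a b : ℕ}
    {F G : MvPowerSeries σ R} (hF : constantCoeff F ≠ 0) (hG : constantCoeff G ≠ 0)
    (h : X i ∣ F * X j ^ a - G * X j ^ b) : a = b := by
  wlog hab : a ≤ b generalizing a b F G
  · refine (this hG hF ?_ (le_of_not_ge hab)).symm
    simpa using h.neg_right
  obtain ⟨Q, hQ⟩ := h
  obtain hab | rfl := hab.lt_or_eq
  · obtain ⟨r, rfl⟩ := Nat.exists_eq_add_of_lt hab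
    refine absurd (constantCoeff_eq_zero_of_X_pow_mul_eq hij (a := 0) (b := a) (G := Q)
      (H := G * X j ^ r) ?_) hF
    linear_combination hQ
  · rfl

theorem eq_zero_of_forall_pow_dvd [CommSemiring R] {V F : MvPowerSeries σ R}
    (hV : constantCoeff V = 0) (h : ∀ n, V ^ n ∣ F) : F = 0 := by
  ext d
  obtain ⟨G, rfl⟩ := h (d.degree + 1)
  refine coeff_of_lt_order ((ENat.natCast_lt_natCast.mpr d.degree.lt_succ_self).trans_le ?_)
  exact (le_order_pow_of_constantCoeff_eq_zero _ hV).trans (le_self_add.trans le_order_mul)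

/- If `φ (F - F(0))` had a constant term `c ≠ 0`, the unit `F - F(0) - c` would be mapped to a
series with zero constant term. -/
theorem constantCoeff_map_of_map_C {τ k : Type*} [Field k]
    (φ : MvPowerSeries σ k →+* MvPowerSeries τ k) (hφ : ∀ c, φ (C c) = C c)
    (F : MvPowerSeries σ k) : constantCoeff (φ F) = constantCoeff F := by
  set c := constantCoeff (φ (F - C (constantCoeff F)))
  suffices c = 0 by simpa [c, hφ, sub_eq_zero] using this
  by_contra hc
  have hunit : IsUnit (F - C (constantCoeff F) - C c) :=
    isUnit_iff_constantCoeff.mpr (by simpa using hc)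
  have := isUnit_constantCoeff _ (hunit.map φ)
  simp [c, hφ] at this

open PowerSeries in
theorem pderiv_map_eq_map_derivative_mul [CommRing R] (ε : R⟦X⟧ →+* MvPowerSeries σ R)
    (hC : ∀ c, ε (PowerSeries.C c) = C c) (hV : constantCoeff (ε PowerSeries.X) = 0) (j : σ)
    (φ : R⟦X⟧) : pderiv R j (ε φ) = ε (d⁄dX R φ) * pderiv R j (ε PowerSeries.X) := by
  set Δ : R⟦X⟧ → MvPowerSeries σ R :=
    fun f => pderiv R j (ε f) - ε (d⁄dX R f) * pderiv R j (ε PowerSeries.X) with hΔ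
  have Δ_add (f g) : Δ (f + g) = Δ f + Δ g := by simp only [hΔ, map_add]; ring
  have Δ_mul (f g) : Δ (f * g) = ε f * Δ g + ε g * Δ f := by
    simp only [hΔ, map_mul, Derivation.leibniz, smul_eq_mul, map_add]; ring
  have Δ_C (c) : Δ (PowerSeries.C c) = 0 := by simp [hΔ, hC]
  have Δ_X_pow (n : ℕ) : Δ (PowerSeries.X ^ n) = 0 := by
    induction n with
    | zero => simpa using Δ_C 1
    | succ n ih => rw [pow_succ, Δ_mul, ih]; simp [hΔ]
  have Δ_coe (P : Polynomial R) : Δ P = 0 := by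
    induction P using Polynomial.induction_on' with
    | add P Q hP hQ => rw [Polynomial.coe_add, Δ_add, hP, hQ, add_zero]
    | monomial n c =>
      rw [Polynomial.coe_monomial, monomial_eq_C_mul_X_pow, Δ_mul, Δ_C, Δ_X_pow]; ring
  -- `Δ` is an `ε`-derivation vanishing on polynomials, so `Δ φ = Δ (X^N s) = (ε X)^N Δ s`.
  rw [← sub_eq_zero]
  refine eq_zero_of_forall_pow_dvd hV fun N => ?_
  obtain ⟨s, hs⟩ : ∃ s, φ = PowerSeries.X ^ N * s + (PowerSeries.trunc N φ : R⟦X⟧) :=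
    ⟨_, eq_X_pow_mul_shift_add_trunc N φ⟩
  change _ ∣ Δ φ
  rw [hs, Δ_add, Δ_coe, Δ_mul, Δ_X_pow, map_pow]
  exact ⟨Δ s, by ring⟩

end MvPowerSeries

theorem PowerSeries.exists_eq_X_pow_mul {R : Type*} [Semiring R] {ψ : PowerSeries R} (hψ : ψ ≠ 0)
    (hψ0 : constantCoeff ψ = 0) :
    ∃ m ≠ 0, ∃ g, constantCoeff g ≠ 0 ∧ ψ = X ^ m * g := by
  have hg : constantCoeff (divXPowOrder ψ) ≠ 0 := constantCoeff_divXPowOrder_eq_zero_iff.not.mpr hψ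
  refine ⟨_, fun hm => hg ?_, _, hg, X_pow_order_mul_divXPowOrder.symm⟩
  rwa [← X_pow_order_mul_divXPowOrder (f := ψ), hm, pow_zero, one_mul] at hψ0

section

variable {R : Type*} [CommRing R] {p i : ℕ} {P t W G lam w : MvPowerSeries (Fin 2) R}

theorem eq_mul_of_X_pow_mul_sub_pow_mul_eq [IsDomain R] {m a : ℕ} (hp : p ≠ 0)
    (ht : constantCoeff t ≠ 0) (hG : constantCoeff G ≠ 0) (hlam : constantCoeff lam ≠ 0)
    (hw : w = t * X 1 ^ p + X 0 * X 1 ^ i * W) (h : X 0 ^ p * P - w ^ m * G = lam * X 1 ^ a) :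
    a = p * m := by
  subst hw
  refine eq_of_X_dvd_mul_X_pow_sub_mul_X_pow (i := 0) (j := 1) (by decide) hlam
    (G := -(t ^ m * G)) (by simp [ht, hG]) ?_
  have hX : X 0 ∣ (t * X 1 ^ p + X 0 * X 1 ^ i * W) ^ m - (t * X 1 ^ p) ^ m := by
    refine (dvd_mul_of_dvd_left (dvd_mul_right (X 0) (X 1 ^ i)) W).trans ?_
    have := sub_dvd_pow_sub_pow (t * X 1 ^ p + X 0 * X 1 ^ i * W) (t * X 1 ^ p) m
    rwa [add_sub_cancel_left] at this
  convert (dvd_mul_of_dvd_left (dvd_pow_self (X 0) hp) P).sub (dvd_mul_of_dvd_left hX G) using 1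
  rw [← h]
  ring

theorem natCast_eq_zero_of_X_pow_mul_sub_pow_mul_eq [IsDomain R] {m : ℕ} (hp : 2 ≤ p)
    (hip : i < p) (hm : m ≠ 0) (ht : constantCoeff t ≠ 0) (hW : constantCoeff W ≠ 0)
    (hG : constantCoeff G ≠ 0) (hw : w = t * X 1 ^ p + X 0 * X 1 ^ i * W)
    (h : X 0 ^ p * P - w ^ m * G = lam * X 1 ^ (p * m)) : (m : R) = 0 := by
  obtain ⟨m, rfl⟩ : ∃ m', m = m' + 1 := ⟨m - 1, by omega⟩
  obtain ⟨s, hs⟩ := Nat.exists_eq_add_of_lt hip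
  obtain ⟨J, hJ⟩ := sq_dvd_add_pow_sub_sub (X 0 * X 1 ^ i * W) (t * X 1 ^ p) (m + 1)
  have hX0 : (X 0 : MvPowerSeries (Fin 2) R) ^ p = X 0 ^ 2 * X 0 ^ (p - 2) := by
    rw [← pow_add]; congr 1; omega
  have hX1 : (X 1 : MvPowerSeries (Fin 2) R) ^ (p * (m + 1)) = X 1 ^ (p * m + i + 1) * X 1 ^ s := by
    rw [← pow_add]; congr 1; rw [hs]; ring
  have := constantCoeff_eq_zero_of_X_pow_mul_eq (i := 0) (j := 1) (by decide) (a := 1)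
    (b := p * m + i) (F := ((m + 1 : ℕ) : MvPowerSeries (Fin 2) R) * t ^ m * W * G)
    (G := X 0 ^ (p - 2) * P - X 1 ^ (2 * i) * W ^ 2 * J * G)
    (H := -(X 1 ^ s * (t ^ (m + 1) * G + lam))) ?_
  · simpa [ht, hW, hG] using this
  · rw [hX0, hX1, hw] at h
    rw [Nat.add_sub_cancel] at hJ
    subst hs
    linear_combination -h - G * hJ

theorem mul_constantCoeff_eq_zero_of_pderiv_mul_pderiv_eq [CharP R p] {a : ℕ}
    {L E : MvPowerSeries (Fin 2) R} {c₀ f₀ : R} (hip : i < p) (ha : i * p + i < a) (hak : (a : R) = 0)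
    (hw : w = t * X 1 ^ p + X 0 * X 1 ^ i * W)
    (hE : E = X 0 ^ p * (X 1 ^ (i * p) * (C c₀ + C f₀ * X 1 + X 0 * X 1 ^ i * L)) -
      lam * X 1 ^ a)
    (h : pderiv R 1 w * pderiv R 0 E = pderiv R 0 w * pderiv R 1 E) :
    f₀ * constantCoeff W = 0 := by
  have hpR : (p : MvPowerSeries (Fin 2) R) = 0 := by
    rw [← map_natCast C, CharP.cast_eq_zero, map_zero]
  have haR : (a : MvPowerSeries (Fin 2) R) = 0 := by rw [← map_natCast C, hak, map_zero]
  obtain ⟨s, hs⟩ := Nat.exists_eq_add_of_lt hip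
  set K := X 1 ^ (s + 1) * pderiv R 0 t + W + X 0 * pderiv R 0 W
  have hDyw : constantCoeff (pderiv R 1 w) = 0 := by
    simp [hw, hpR, zero_pow (show p ≠ 0 by omega)]
  have hK : constantCoeff K = constantCoeff W := by simp [K]
  have hDxw : pderiv R 0 w = X 1 ^ i * K := by
    simp [hw, K, hs]; ring
  have hDxE : pderiv R 0 E =
      X 0 ^ p * X 1 ^ (i * p + i) * (L + X 0 * pderiv R 0 L) - pderiv R 0 lam * X 1 ^ a := by
    simp [hE, hpR]; ring
  have hDyE : pderiv R 1 E = X 0 ^ p * X 1 ^ (i * p) * C f₀ + X 0 ^ (p + 1) * X 1 ^ (i * p) *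
      (X 1 ^ i * pderiv R 1 L + (i : MvPowerSeries (Fin 2) R) * X 1 ^ (i - 1) * L) -
      pderiv R 1 lam * X 1 ^ a := by
    simp [hE, hpR, haR]; ring
  rw [hDxw, hDxE, hDyE] at h
  obtain ⟨r, rfl⟩ := Nat.exists_eq_add_of_lt ha
  have := constantCoeff_eq_zero_of_X_pow_mul_eq (i := 0) (j := 1) (by decide) (a := p)
    (b := i * p + i) (F := C f₀ * K - pderiv R 1 w * (L + X 0 * pderiv R 0 L))
    (G := -(X 1 ^ i * K * X 1 ^ (i * p) *
      (X 1 ^ i * pderiv R 1 L + (i : MvPowerSeries (Fin 2) R) * X 1 ^ (i - 1) * L)))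
    (H := X 1 ^ r * (X 1 ^ i * K * pderiv R 1 lam - pderiv R 1 w * pderiv R 0 lam))
    (by linear_combination -h)
  simpa [hDyw, hK] using this

end

theorem stmt11_general (k : Type) [Field k] (p : ℕ) [CharP k p]
    (u v Λ Ω T : MvPowerSeries (Fin 2) k) (c₀ f₀ e₀ : k)
    (hf : f₀ ≠ 0) (he : e₀ ≠ 0)
    (hTu : MvPowerSeries.constantCoeff (σ := Fin 2) (R := k) T ≠ 0)
    (hΩ : MvPowerSeries.constantCoeff (σ := Fin 2) (R := k) Ω = 0)
    -- `u = x^p (c₀ + f₀ y + x Λ₀)`: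
    (hu : u = (MvPowerSeries.X 0) ^ p *
      (MvPowerSeries.C (σ := Fin 2) (R := k) c₀ + MvPowerSeries.C (σ := Fin 2) (R := k) f₀ * MvPowerSeries.X 1
        + MvPowerSeries.X 0 * Λ))
    -- `v = τ₀(y) y^p + e₀ x + x Ω₀`:
    (hv : v = T * (MvPowerSeries.X 1) ^ p
      + MvPowerSeries.C (σ := Fin 2) (R := k) e₀ * MvPowerSeries.X 0 + MvPowerSeries.X 0 * Ω)
    (i : ℕ) (hip : i < p)
    (σ : MvPowerSeries (Fin 2) k →+* MvPowerSeries (Fin 2) k)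
    (hσ : IsSubstitutionHom k σ (MvPowerSeries.X 0 * MvPowerSeries.X 1 ^ i)
      (MvPowerSeries.X 1))
    (ψ : PowerSeries k) (hψ : PowerSeries.constantCoeff (R := k) ψ = 0)
    (ε : PowerSeries k →+* MvPowerSeries (Fin 2) k)
    (hε : IsSubstitutionHom₁ k ε (σ v))
    (lam : MvPowerSeries (Fin 2) k) (hlam : IsUnit lam) (a : ℕ) :
    σ u - ε ψ ≠ lam * (MvPowerSeries.X 1) ^ a := by
  obtain ⟨hσC, hσx, hσy, -⟩ := hσ
  obtain ⟨hεC, hεX, -⟩ := hε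
  have hp : 2 ≤ p := by have := CharP.char_ne_one k p; omega
  have hσu :
      σ u = X 0 ^ p * (X 1 ^ (i * p) * (C c₀ + C f₀ * X 1 + X 0 * X 1 ^ i * σ Λ)) := by
    simp only [hu, map_add, map_mul, map_pow, hσx, hσy, hσC]; ring
  have hσv : σ v = σ T * X 1 ^ p + X 0 * X 1 ^ i * (C e₀ + σ Ω) := by
    simp only [hv, map_add, map_mul, map_pow, hσx, hσy, hσC]; ring
  have hσ0 := constantCoeff_map_of_map_C σ hσC
  have ht : constantCoeff (σ T) ≠ 0 := by rwa [hσ0]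
  have hW : constantCoeff (C e₀ + σ Ω) = e₀ := by simp [hσ0, hΩ]
  have hw : constantCoeff (σ v) = 0 := by simp [hσv, zero_pow (show p ≠ 0 by omega)]
  have hlam0 : constantCoeff lam ≠ 0 := (isUnit_constantCoeff lam hlam).ne_zero
  intro h
  have hE : ε ψ = σ u - lam * X 1 ^ a := by rw [← h]; ring
  have hψ0 : ψ ≠ 0 := by
    rintro rfl
    refine not_X_dvd_mul_X_pow (i := 0) (j := 1) (a := a) (by decide) hlam0 ?_
    rw [← h, map_zero, sub_zero, hσu]
    exact dvd_mul_of_dvd_left (dvd_pow_self _ (by omega)) _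
  obtain ⟨m, hm, g, hg, hψmg⟩ := PowerSeries.exists_eq_X_pow_mul hψ0 hψ
  have hG : constantCoeff (ε g) ≠ 0 := by rwa [constantCoeff_map_of_map_C ε hεC]
  have hrow : σ u - σ v ^ m * ε g = lam * X 1 ^ a := by rw [← h, hψmg, map_mul, map_pow, hεX]
  rw [hσu] at hrow
  obtain rfl := eq_mul_of_X_pow_mul_sub_pow_mul_eq (by omega) ht hG hlam0 hσv hrow
  obtain ⟨n, rfl⟩ := (CharP.cast_eq_zero_iff k p m).mp
    (natCast_eq_zero_of_X_pow_mul_sub_pow_mul_eq hp hip hm ht (by rwa [hW]) hG hσv hrow)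
  have hn : 0 < n := Nat.pos_of_ne_zero (by rintro rfl; simp at hm)
  have hpp : p * p ≤ p * (p * n) := Nat.mul_le_mul_left _ (Nat.le_mul_of_pos_right _ hn)
  have hJ : pderiv k 1 (σ v) * pderiv k 0 (ε ψ) = pderiv k 0 (σ v) * pderiv k 1 (ε ψ) := by
    simp only [pderiv_map_eq_map_derivative_mul ε hεC (hεX ▸ hw), hεX]; ring
  have := mul_constantCoeff_eq_zero_of_pderiv_mul_pderiv_eq (a := p * (p * n)) hip (by nlinarith)
    (by push_cast; simp [CharP.cast_eq_zero]) hσv (by rw [hE, hσu]) hJ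
  exact mul_ne_zero hf he (by rwa [hW] at this)

/-- With `u, v` as in the hypotheses, `1 ≤ i < p` and
`σᵢ : k⟦x,y⟧ → k⟦X,Y⟧` the substitution `x ↦ X Y^i`, `y ↦ Y`, for every
one-variable power series `ψ(T) ∈ k⟦T⟧` with `ψ(0) = 0`, every unit
`λ ∈ k⟦X,Y⟧` and every `a ∈ ℕ`, we have `σᵢ(u) - ψ(σᵢ(v)) ≠ λ Y^a`. -/
theorem stmt11 (k : Type) [Field k] (p : ℕ) (hp : p.Prime) [CharP k p]
    (u v Λ Ω T : MvPowerSeries (Fin 2) k) (c₀ f₀ e₀ : k)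
    (hc : c₀ ≠ 0) (hf : f₀ ≠ 0) (he : e₀ ≠ 0)
    -- `T` is a unit power series in `y` alone (`τ₀(y)`):
    (hTy : ∀ d : Fin 2 →₀ ℕ, d 0 ≠ 0 → MvPowerSeries.coeff (R := k) d T = 0)
    (hTu : MvPowerSeries.constantCoeff (σ := Fin 2) (R := k) T ≠ 0)
    (hΩ : MvPowerSeries.constantCoeff (σ := Fin 2) (R := k) Ω = 0)
    -- `u = x^p (c₀ + f₀ y + x Λ₀)`:
    (hu : u = (MvPowerSeries.X 0) ^ p *
      (MvPowerSeries.C (σ := Fin 2) (R := k) c₀ + MvPowerSeries.C (σ := Fin 2) (R := k) f₀ * MvPowerSeries.X 1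
        + MvPowerSeries.X 0 * Λ))
    -- `v = τ₀(y) y^p + e₀ x + x Ω₀`:
    (hv : v = T * (MvPowerSeries.X 1) ^ p
      + MvPowerSeries.C (σ := Fin 2) (R := k) e₀ * MvPowerSeries.X 0 + MvPowerSeries.X 0 * Ω)
    (i : ℕ) (hi1 : 1 ≤ i) (hip : i < p)
    (σ : MvPowerSeries (Fin 2) k →+* MvPowerSeries (Fin 2) k)
    (hσ : IsSubstitutionHom k σ (MvPowerSeries.X 0 * MvPowerSeries.X 1 ^ i)
      (MvPowerSeries.X 1))
    (ψ : PowerSeries k) (hψ : PowerSeries.constantCoeff (R := k) ψ = 0)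
    (ε : PowerSeries k →+* MvPowerSeries (Fin 2) k)
    (hε : IsSubstitutionHom₁ k ε (σ v))
    (lam : MvPowerSeries (Fin 2) k) (hlam : IsUnit lam) (a : ℕ) :
    σ u - ε ψ ≠ lam * (MvPowerSeries.X 1) ^ a :=
  stmt11_general k p u v Λ Ω T c₀ f₀ e₀ hf he hTu hΩ hu hv i hip σ hσ ψ hψ ε hε lam hlam a
end
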